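/- arXiv:1802.08437 — 8 statements merged into one kernel-verified Lean document; each statement's English description precedes it below -/
import Mathlib

section
/- Every peak decreasing abstract rewrite system is confluent. -/
namespace KB

-- Generic ARS notions
def NF {α : Type _} (r : α → α → Prop) (a : α) : Prop := ∀ b, ¬ r a b

def SymmCl {α : Type _} (r : α → α → Prop) (a b : α) : Prop := r a b ∨ r b a

def Conv {α : Type _} (r : α → α → Prop) : α → α → Prop :=
  Relation.ReflTransGen (SymmCl r)

def Joinable {α : Type _} (r : α → α → Prop) (a b : α) : Prop :=
  ∃ c, Relation.ReflTransGen r a c ∧ Relation.ReflTransGen r b c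

def Confluent {α : Type _} (r : α → α → Prop) : Prop :=
  ∀ a b c, Relation.ReflTransGen r a b → Relation.ReflTransGen r a c → Joinable r b c

def Terminating {α : Type _} (r : α → α → Prop) : Prop :=
  WellFounded (fun a b => r b a)

def Complete {α : Type _} (r : α → α → Prop) : Prop := Terminating r ∧ Confluent r

def NormTo {α : Type _} (r : α → α → Prop) (a b : α) : Prop :=
  Relation.ReflTransGen r a b ∧ NF r b

-- First-order terms
inductive Term (F V : Type) : Type where
  | var : V → Term F V
  | app : F → List (Term F V) → Term F V

variable {F V : Type}

def Term.subst (σ : V → Term F V) : Term F V → Term F V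
  | .var x => σ x
  | .app f ts => .app f (ts.attach.map fun t => Term.subst σ t.1)
decreasing_by
  simp only [Term.app.sizeOf_spec]
  have := List.sizeOf_lt_of_mem t.2
  omega

def Term.rename (π : V → V) (t : Term F V) : Term F V :=
  t.subst (fun x => Term.var (π x))

inductive Ctx (F V : Type) : Type where
  | hole : Ctx F V
  | cons : F → List (Term F V) → Ctx F V → List (Term F V) → Ctx F V

def Ctx.fill : Ctx F V → Term F V → Term F V
  | .hole, t => t
  | .cons f l C r, t => Term.app f (l ++ C.fill t :: r)

abbrev TRS (F V : Type) := Set (Term F V × Term F V)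

def Step (R : TRS F V) (s t : Term F V) : Prop :=
  ∃ (C : Ctx F V) (σ : V → Term F V) (l r : Term F V),
    (l, r) ∈ R ∧ s = C.fill (l.subst σ) ∧ t = C.fill (r.subst σ)

inductive InVars (x : V) : Term F V → Prop where
  | var : InVars x (Term.var x)
  | app {f : F} {ts : List (Term F V)} {t : Term F V} :
      t ∈ ts → InVars x t → InVars x (Term.app f ts)

def WellFormedRule (l r : Term F V) : Prop :=
  (∀ x : V, l ≠ Term.var x) ∧ ∀ x, InVars x r → InVars x l

def IsTRS (R : TRS F V) : Prop := ∀ p ∈ R, WellFormedRule p.1 p.2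

inductive Ground : Term F V → Prop where
  | app {f : F} {ts : List (Term F V)} : (∀ t ∈ ts, Ground t) → Ground (Term.app f ts)

def GroundSys (R : TRS F V) : Prop := ∀ p ∈ R, Ground p.1 ∧ Ground p.2

def LeftReduced (R : TRS F V) : Prop := ∀ p ∈ R, NF (Step (R \ {p})) p.1
def RightReduced (R : TRS F V) : Prop := ∀ p ∈ R, NF (Step R) p.2
def Reduced (R : TRS F V) : Prop := LeftReduced R ∧ RightReduced R

def RuleVariant (p q : Term F V × Term F V) : Prop :=
  ∃ π : V → V, Function.Bijective π ∧ p.1 = q.1.rename π ∧ p.2 = q.2.rename π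

def LitSim (R S : TRS F V) : Prop :=
  (∀ p ∈ R, ∃ q ∈ S, RuleVariant p q) ∧ (∀ q ∈ S, ∃ p ∈ R, RuleVariant q p)

def Encompass (s t : Term F V) : Prop :=
  ∃ (C : Ctx F V) (σ : V → Term F V), s = C.fill (t.subst σ)

def PEncompass (s t : Term F V) : Prop := Encompass s t ∧ ¬ Encompass t s

def ReductionOrder (gt : Term F V → Term F V → Prop) : Prop :=
  Transitive gt ∧ WellFounded (fun a b => gt b a) ∧
  (∀ (C : Ctx F V) s t, gt s t → gt (C.fill s) (C.fill t)) ∧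
  (∀ (σ : V → Term F V) s t, gt s t → gt (s.subst σ) (t.subst σ))

-- positions
def subt : List ℕ → Term F V → Option (Term F V)
  | [], t => some t
  | _ :: _, Term.var _ => none
  | i :: p, Term.app _ ts => (ts[i]?).bind (subt p)

def repl : List ℕ → Term F V → Term F V → Option (Term F V)
  | [], _, u => some u
  | _ :: _, Term.var _, _ => none
  | i :: p, Term.app f ts, u =>
      (ts[i]?).bind fun w => (repl p w u).map fun w' => Term.app f (ts.set i w')

def FunPos (p : List ℕ) (t : Term F V) : Prop :=
  ∃ f ts, subt p t = some (Term.app f ts)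

def Unifier (σ : V → Term F V) (s t : Term F V) : Prop := s.subst σ = t.subst σ

def IsMGU (σ : V → Term F V) (s t : Term F V) : Prop :=
  Unifier σ s t ∧ ∀ τ, Unifier τ s t → ∃ ρ, ∀ x, (σ x).subst ρ = τ x

def VarsDisjoint (p q : Term F V × Term F V) : Prop :=
  ∀ x, ¬ ((InVars x p.1 ∨ InVars x p.2) ∧ (InVars x q.1 ∨ InVars x q.2))

def Overlap (R : TRS F V) (l1 r1 : Term F V) (p : List ℕ) (l2 r2 : Term F V) : Prop :=
  (∃ q ∈ R, RuleVariant (l1, r1) q) ∧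
  (∃ q ∈ R, RuleVariant (l2, r2) q) ∧
  VarsDisjoint (l1, r1) (l2, r2) ∧
  FunPos p l2 ∧
  (∃ w, subt p l2 = some w ∧ ∃ σ, Unifier σ l1 w) ∧
  (p = [] → ¬ RuleVariant (l1, r1) (l2, r2))

def CPeak (R : TRS F V) (t : Term F V) (p : List ℕ) (s u : Term F V) : Prop :=
  ∃ (l1 r1 l2 r2 : Term F V) (σ : V → Term F V) (w : Term F V),
    Overlap R l1 r1 p l2 r2 ∧ subt p l2 = some w ∧ IsMGU σ l1 w ∧
    s = l2.subst σ ∧ u = r2.subst σ ∧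
    repl p (l2.subst σ) (r1.subst σ) = some t

def PrimeCPeak (R : TRS F V) (t : Term F V) (p : List ℕ) (s u : Term F V) : Prop :=
  CPeak R t p s u ∧
  ∀ w v, subt p s = some w → (∃ q, q ≠ [] ∧ subt q w = some v) → NF (Step R) v

def PCP (R : TRS F V) : Set (Term F V × Term F V) :=
  { e | ∃ p s, PrimeCPeak R e.1 p s e.2 }

def Nabla (R : TRS F V) (s u w : Term F V) : Prop :=
  Relation.TransGen (Step R) s u ∧ Relation.TransGen (Step R) s w ∧
  (Joinable (Step R) u w ∨ SymmCl (Step (PCP R)) u w)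

-- counted conversions and rewrite sequences
inductive ConvN {α : Type _} (r : α → α → Prop) : ℕ → ℕ → α → α → Prop where
  | refl (a : α) : ConvN r 0 0 a a
  | fwd {l n : ℕ} {a b c : α} : r a b → ConvN r l n b c → ConvN r l (n + 1) a c
  | bwd {l n : ℕ} {a b c : α} : r b a → ConvN r l n b c → ConvN r (l + 1) n a c

inductive StepsN {α : Type _} (r : α → α → Prop) : ℕ → α → α → Prop where
  | refl (a : α) : StepsN r 0 a a
  | step {n : ℕ} {a b c : α} : r a b → StepsN r n b c → StepsN r (n + 1) a c

def RandomDescent {α : Type _} (r : α → α → Prop) : Prop :=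
  ∀ l m a b, ConvN r l m a b → NF r b → ∃ n, StepsN r n a b ∧ n + l = m


namespace PDAux

variable {A I : Type _}

/-- Labeled conversions. -/
inductive CL (r : I → A → A → Prop) : List I → A → A → Prop where
  | nil (a : A) : CL r [] a a
  | fwd {i L a b c} : r i a b → CL r L b c → CL r (i :: L) a c
  | bwd {i L a b c} : r i b a → CL r L b c → CL r (i :: L) a c

/-- Labeled forward rewrite sequences. -/
inductive FwL (r : I → A → A → Prop) : List I → A → A → Prop where
  | nil (a : A) : FwL r [] a a
  | cons {i L a b c} : r i a b → FwL r L b c → FwL r (i :: L) a c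

variable {r : I → A → A → Prop} {gt : I → I → Prop}

theorem CL.append {L1 L2 a b c} (h1 : CL r L1 a b) (h2 : CL r L2 b c) :
    CL r (L1 ++ L2) a c := by
  induction h1 with
  | nil => simpa
  | fwd h _ ih => exact .fwd h (ih h2)
  | bwd h _ ih => exact .bwd h (ih h2)

theorem FwL.toCL {L a b} (h : FwL r L a b) : CL r L a b := by
  induction h with
  | nil => exact .nil _
  | cons h _ ih => exact .fwd h ih

theorem FwL.snoc {L a b c i} (h : FwL r L a b) (h2 : r i b c) :
    FwL r (L ++ [i]) a c := by
  induction h with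
  | nil => exact .cons h2 (.nil _)
  | cons h _ ih => exact .cons h (ih h2)

theorem FwL.rtg {L a b} (h : FwL r L a b) :
    Relation.ReflTransGen (fun x y => ∃ i, r i x y) a b := by
  induction h with
  | nil => exact .refl
  | cons h _ ih => exact .head ⟨_, h⟩ ih

theorem rtg_FwL {a b} (h : Relation.ReflTransGen (fun x y => ∃ i, r i x y) a b) :
    ∃ L, FwL r L a b := by
  induction h with
  | refl => exact ⟨[], .nil _⟩
  | tail _ hs ih =>
    obtain ⟨L, hL⟩ := ih
    obtain ⟨i, hi⟩ := hs
    exact ⟨L ++ [i], hL.snoc hi⟩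

/-- Reverse a forward sequence onto the front of a conversion. -/
theorem rev_lemma {L b c} (h : FwL r L b c) :
    ∀ M (d : A), CL r M b d → ∃ L', CL r L' c d ∧ (L' : Multiset I) = ↑L + ↑M := by
  induction h with
  | nil => exact fun M d hM => ⟨M, hM, by simp⟩
  | @cons j L' b v c hst _ ih =>
    intro M d hM
    obtain ⟨L'', hL'', heq⟩ := ih (j :: M) d (.bwd hst hM)
    refine ⟨L'', hL'', ?_⟩
    rw [heq, ← Multiset.cons_coe, ← Multiset.cons_coe, Multiset.add_cons, Multiset.cons_add]

theorem conv_CL {P : I → Prop} {a b : A}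
    (h : Relation.ReflTransGen (fun x y => ∃ k, P k ∧ (r k x y ∨ r k y x)) a b) :
    ∃ L, CL r L a b ∧ ∀ k ∈ L, P k := by
  induction h with
  | refl => exact ⟨[], .nil _, by simp⟩
  | tail _ hs ih =>
    obtain ⟨L, hL, hP⟩ := ih
    obtain ⟨k, hk, hor⟩ := hs
    refine ⟨L ++ [k], hL.append ?_, ?_⟩
    · rcases hor with h' | h'
      · exact .fwd h' (.nil _)
      · exact .bwd h' (.nil _)
    · intro x hx
      rcases List.mem_append.mp hx with hx | hx
      · exact hP x hx
      · simp at hx; subst hx; exact hk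

/-- One-step multiset replacement order: replace one element by finitely many smaller ones. -/
def MLt (gt : I → I → Prop) (N M : Multiset I) : Prop :=
  ∃ i K Z, M = i ::ₘ Z ∧ N = K + Z ∧ ∀ k ∈ K, gt i k

theorem MLt.cons {N M : Multiset I} (a : I) (h : MLt gt N M) : MLt gt (a ::ₘ N) (a ::ₘ M) := by
  obtain ⟨i, K, Z, hM, hN, hK⟩ := h
  exact ⟨i, K, a ::ₘ Z, by rw [hM, Multiset.cons_swap], by rw [hN, Multiset.add_cons], hK⟩

theorem TLt.cons {N M : Multiset I} (a : I) (h : Relation.TransGen (MLt gt) N M) :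
    Relation.TransGen (MLt gt) (a ::ₘ N) (a ::ₘ M) := by
  induction h with
  | single h => exact .single (h.cons a)
  | tail _ h ih => exact ih.tail (h.cons a)

theorem acc_cons :
    ∀ i, Acc (fun x y : I => gt y x) i →
    ∀ M : Multiset I, Acc (MLt gt) M → Acc (MLt gt) (i ::ₘ M) := by
  intro i hi
  induction hi with
  | intro i _ ih1 =>
    intro M hM
    induction hM with
    | intro M hMacc ih2 =>
      constructor
      rintro N ⟨a, K, Z, hMZ, hNK, hK⟩
      rcases Multiset.cons_eq_cons.mp hMZ with ⟨h1, h2⟩ | ⟨_, cs, h1, h2⟩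
      · -- a = i, Z = M
        subst hNK; rw [← h1] at hK; rw [← h2]
        clear hMZ h1 h2
        induction K using Multiset.induction with
        | empty => simpa using Acc.intro M hMacc
        | cons k K ihK =>
          rw [Multiset.cons_add]
          exact ih1 k (hK k (Multiset.mem_cons_self k K)) (K + M)
            (ihK fun x hx => hK x (Multiset.mem_cons_of_mem hx))
      · -- M = a ::ₘ cs, Z = i ::ₘ cs
        subst hNK h1 h2
        have : K + i ::ₘ cs = i ::ₘ (K + cs) := by rw [Multiset.add_cons]
        rw [this]
        exact ih2 (K + cs) ⟨a, K, cs, rfl, rfl, hK⟩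

theorem mlt_wf (hwf : WellFounded (fun i j : I => gt j i)) : WellFounded (MLt gt) := by
  constructor
  intro M
  induction M using Multiset.induction with
  | empty =>
    constructor
    rintro N ⟨i, K, Z, hM, -, -⟩
    exact absurd hM.symm (Multiset.cons_ne_zero)
  | cons i M ih => exact acc_cons i (hwf.apply i) M ih

theorem peak_step (Z : Multiset I) (i j : I) (K : Multiset I)
    (hK : ∀ k ∈ K, gt i k ∨ gt j k) :
    Relation.TransGen (MLt gt) (K + Z) (i ::ₘ j ::ₘ Z) := by
  classical
  have hsplit : K.filter (fun k => gt i k) + K.filter (fun k => ¬ gt i k) = K :=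
    Multiset.filter_add_not _ K
  set K1 := K.filter (fun k => gt i k) with hK1
  set K2 := K.filter (fun k => ¬ gt i k) with hK2
  have step2 : MLt gt (K + Z) (j ::ₘ (K1 + Z)) := by
    refine ⟨j, K2, K1 + Z, rfl, ?_, ?_⟩
    · rw [← hsplit]; rw [← add_assoc, add_comm K2 K1]
    · intro k hk
      have h1 : ¬ gt i k := (Multiset.mem_filter.mp hk).2
      have h2 : k ∈ K := (Multiset.mem_filter.mp hk).1
      exact (hK k h2).resolve_left h1
  have step1 : MLt gt (j ::ₘ (K1 + Z)) (i ::ₘ j ::ₘ Z) := by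
    refine ⟨i, K1, j ::ₘ Z, rfl, ?_, fun k hk => (Multiset.mem_filter.mp hk).2⟩
    rw [Multiset.add_cons]
  exact .head step2 (.single step1)


theorem step_lemma
    (hpd : ∀ (i j : I) (a b c : A), r i a b → r j a c →
      Relation.ReflTransGen
        (fun x y => ∃ k, (gt i k ∨ gt j k) ∧ (r k x y ∨ r k y x)) b c)
    {L a b} (h : CL r L a b) :
    (∃ (c : A) (L1 L2 : List I), FwL r L1 a c ∧ FwL r L2 b c ∧
        (L : Multiset I) = ↑L1 + ↑L2) ∨
    ∃ L' : List I, CL r L' a b ∧ Relation.TransGen (MLt gt) ↑L' ↑L := by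
  induction h with
  | nil a => exact Or.inl ⟨a, [], [], .nil a, .nil a, by simp⟩
  | @fwd i L a v b hstep _ ih =>
    rcases ih with ⟨c, L1, L2, h1, h2, hM⟩ | ⟨L', h', hlt⟩
    · refine Or.inl ⟨c, i :: L1, L2, .cons hstep h1, h2, ?_⟩
      rw [← Multiset.cons_coe, ← Multiset.cons_coe, Multiset.cons_add, hM]
    · refine Or.inr ⟨i :: L', .fwd hstep h', ?_⟩
      rw [← Multiset.cons_coe, ← Multiset.cons_coe]
      exact TLt.cons i hlt
  | @bwd i L a v b hstep _ ih =>
    -- hstep : r i v a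
    rcases ih with ⟨c, L1, L2, h1, h2, hM⟩ | ⟨L', h', hlt⟩
    · cases h1 with
      | nil =>
        -- v = c; valley for a b with apex a
        refine Or.inl ⟨a, [], L2 ++ [i], .nil a, h2.snoc hstep, ?_⟩
        have : (L : Multiset I) = ↑L2 := by simpa using hM
        rw [← Multiset.cons_coe, this]
        refine (Multiset.coe_eq_coe.mpr (List.perm_append_singleton i L2).symm).symm ▸ ?_
        rfl
      | @cons j L1' v w c hst h1' =>
        -- peak: r i v a, r j v w
        obtain ⟨K, hKconv, hKlab⟩ := conv_CL (hpd i j v a w hstep hst)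
        obtain ⟨L2r, hcb, hL2r⟩ := rev_lemma h2 [] b (.nil b)
        refine Or.inr ⟨K ++ (L1' ++ L2r), hKconv.append (h1'.toCL.append hcb), ?_⟩
        have h1 : ((K ++ (L1' ++ L2r) : List I) : Multiset I)
            = (K : Multiset I) + ((L1' : Multiset I) + (L2 : Multiset I)) := by
          rw [← Multiset.coe_add, ← Multiset.coe_add, hL2r]
          simp
        have h2' : ((i :: L : List I) : Multiset I)
            = i ::ₘ j ::ₘ ((L1' : Multiset I) + (L2 : Multiset I)) := by
          rw [← Multiset.cons_coe, hM, ← Multiset.cons_coe, Multiset.cons_add]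
        rw [h1, h2']
        exact peak_step _ i j _ (fun k hk => hKlab k hk)
    · refine Or.inr ⟨i :: L', .bwd hstep h', ?_⟩
      rw [← Multiset.cons_coe, ← Multiset.cons_coe]
      exact TLt.cons i hlt

theorem main
    (hwf : WellFounded (fun i j : I => gt j i))
    (hpd : ∀ (i j : I) (a b c : A), r i a b → r j a c →
      Relation.ReflTransGen
        (fun x y => ∃ k, (gt i k ∨ gt j k) ∧ (r k x y ∨ r k y x)) b c) :
    ∀ M : Multiset I, ∀ (L : List I) (a b : A), (L : Multiset I) = M → CL r L a b →
      ∃ c, Relation.ReflTransGen (fun x y => ∃ i, r i x y) a c ∧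
        Relation.ReflTransGen (fun x y => ∃ i, r i x y) b c := by
  intro M
  induction M using WellFounded.induction ((mlt_wf hwf).transGen) with
  | _ M ih =>
    intro L a b hLM h
    rcases step_lemma hpd h with ⟨c, L1, L2, h1, h2, -⟩ | ⟨L', h', hlt⟩
    · exact ⟨c, h1.rtg, h2.rtg⟩
    · exact ih _ (hLM ▸ hlt) L' a b rfl h'

end PDAux

/-- Every peak decreasing ARS is confluent. -/
theorem peak_decreasing_confluent {A I : Type _} (r : I → A → A → Prop)
    (gt : I → I → Prop) (htrans : Transitive gt)
    (hwf : WellFounded (fun i j => gt j i))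
    (hpd : ∀ (i j : I) (a b c : A), r i a b → r j a c →
      Relation.ReflTransGen
        (fun x y => ∃ k, (gt i k ∨ gt j k) ∧ (r k x y ∨ r k y x)) b c) :
    Confluent (fun x y => ∃ i, r i x y) := by
  intro a b c hab hac
  obtain ⟨L1, h1⟩ := PDAux.rtg_FwL hab
  obtain ⟨L2, h2⟩ := PDAux.rtg_FwL hac
  obtain ⟨L', hconv, -⟩ := PDAux.rev_lemma h1 L2 c h2.toCL
  obtain ⟨d, hd1, hd2⟩ := PDAux.main hwf hpd ↑L' L' b c rfl hconv
  exact ⟨d, hd1, hd2⟩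

end KB
end

section
/- Every source decreasing abstract rewrite system is peak decreasing (with the source labeling), and hence confluent. -/
namespace KB

variable {F V : Type}

/-!
A source decreasing ARS is peak decreasing for the labelling of every step by its source. Peak
decreasingness with well-founded labels gives confluence by peak elimination: a conversion is
either a valley or contains a local peak `u ←ᵢ q →ⱼ v`, and replacing that peak by a conversion
with labels below `i` or `j` decreases the multiset of labels in the Dershowitz–Manna order
(`Relation.CutExpand`), which is well founded. So every conversion can be turned into a valley.
-/

open Relation

section LabeledARS

variable {A L : Type*}

def SymmLabeled (s : L → A → A → Prop) (k : L) (x y : A) : Prop := s k x y ∨ s k y x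

def PeakDecreasing (s : L → A → A → Prop) (gt : L → L → Prop) : Prop :=
  ∀ (i j : L) (a b c : A), s i a b → s j a c →
    ReflTransGen (fun x y => ∃ k, (gt i k ∨ gt j k) ∧ SymmLabeled s k x y) b c

inductive LabeledPath (s : L → A → A → Prop) : Multiset L → A → A → Prop
  | refl (a : A) : LabeledPath s 0 a a
  | cons {k : L} {M : Multiset L} {a b c : A} :
      s k a b → LabeledPath s M b c → LabeledPath s (k ::ₘ M) a c

variable {s t : L → A → A → Prop} {k : L} {M N : Multiset L} {a b c : A}

namespace LabeledPath

theorem single (h : s k a b) : LabeledPath s {k} a b := .cons h (.refl b)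

theorem append (h₁ : LabeledPath s M a b) (h₂ : LabeledPath s N b c) :
    LabeledPath s (M + N) a c := by
  induction h₁ with
  | refl => simpa using h₂
  | cons h _ ih => rw [Multiset.cons_add]; exact .cons h (ih h₂)

theorem snoc (h : LabeledPath s M a b) (h' : s k b c) : LabeledPath s (k ::ₘ M) a c := by
  rw [← Multiset.singleton_add, add_comm]
  exact h.append (single h')

theorem mono (hst : ∀ k x y, s k x y → t k x y) (h : LabeledPath s M a b) :
    LabeledPath t M a b := by
  induction h with
  | refl => exact .refl _
  | cons h _ ih => exact .cons (hst _ _ _ h) ih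

theorem reverse (hs : ∀ k x y, s k x y → s k y x) (h : LabeledPath s M a b) :
    LabeledPath s M b a := by
  induction h with
  | refl => exact .refl _
  | cons h _ ih => exact ih.snoc (hs _ _ _ h)

theorem symmLabeled (h : LabeledPath s M a b) : LabeledPath (SymmLabeled s) M a b :=
  h.mono fun _ _ _ => Or.inl

theorem symmLabeled_reverse (h : LabeledPath s M a b) : LabeledPath (SymmLabeled s) M b a :=
  h.symmLabeled.reverse fun _ _ _ => Or.symm

theorem reflTransGen (h : LabeledPath s M a b) : ReflTransGen (fun x y => ∃ k, s k x y) a b := by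
  induction h with
  | refl => exact .refl
  | cons h _ ih => exact .head ⟨_, h⟩ ih

theorem exists_of_reflTransGen {r : A → A → Prop} {p : L → Prop}
    (hr : ∀ x y, r x y → ∃ k, p k ∧ s k x y) (h : ReflTransGen r a b) :
    ∃ M, (∀ k ∈ M, p k) ∧ LabeledPath s M a b := by
  induction h using ReflTransGen.head_induction_on with
  | refl => exact ⟨0, by simp, .refl _⟩
  | head hstep _ ih =>
    obtain ⟨k, hk, hs⟩ := hr _ _ hstep
    obtain ⟨M, hM, hpath⟩ := ih
    exact ⟨k ::ₘ M, by simpa [hk] using hM, .cons hs hpath⟩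

end LabeledPath

def LabeledValley (s : L → A → A → Prop) (M : Multiset L) (a b : A) : Prop :=
  ∃ e M₁ M₂, M = M₁ + M₂ ∧ LabeledPath s M₁ a e ∧ LabeledPath s M₂ b e

theorem LabeledValley.joinable (h : LabeledValley s M a b) :
    Joinable (fun x y => ∃ k, s k x y) a b := by
  obtain ⟨e, _, _, _, h₁, h₂⟩ := h
  exact ⟨e, h₁.reflTransGen, h₂.reflTransGen⟩

theorem LabeledPath.valley_or_peak (h : LabeledPath (SymmLabeled s) M a b) :
    LabeledValley s M a b ∨
      ∃ i j q u v N₁ N₂, M = i ::ₘ j ::ₘ (N₁ + N₂) ∧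
        LabeledPath (SymmLabeled s) N₁ a u ∧ s i q u ∧ s j q v ∧
        LabeledPath (SymmLabeled s) N₂ v b := by
  induction h with
  | refl a => exact .inl ⟨a, 0, 0, by simp, .refl _, .refl _⟩
  | @cons k M a c b hstep _ ih =>
    rcases ih with ⟨e, M₁, M₂, rfl, hce, hbe⟩ |
      ⟨i, j, q, u, v, N₁, N₂, rfl, hcu, hqu, hqv, hvb⟩
    · rcases hstep with hac | hca
      · exact .inl ⟨e, k ::ₘ M₁, M₂, by simp, .cons hac hce, hbe⟩
      · cases hce with
        | refl => exact .inl ⟨a, 0, k ::ₘ M₂, by simp, .refl _, hbe.snoc hca⟩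
        | @cons j M₁ _ f _ hcf hfe =>
          exact .inr ⟨k, j, c, a, f, 0, M₁ + M₂, by simp, .refl _, hca, hcf,
            hfe.symmLabeled.append hbe.symmLabeled_reverse⟩
    · refine .inr ⟨i, j, q, u, v, k ::ₘ N₁, N₂, ?_, .cons hstep hcu, hqu, hqv, hvb⟩
      simp [Multiset.cons_swap]

theorem cutExpand_transGen_of_lt_or_lt {lt : L → L → Prop} {i j : L} {K : Multiset L}
    (hK : ∀ k ∈ K, lt k i ∨ lt k j) (N : Multiset L) :
    TransGen (CutExpand lt) (K + N) (i ::ₘ j ::ₘ N) := by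
  classical
  have hi : CutExpand lt (K.filter (lt · i) + j ::ₘ N) (i ::ₘ j ::ₘ N) := by
    rw [← Multiset.singleton_add i]
    exact (cutExpand_add_right _).2 (cutExpand_singleton fun k hk => (Multiset.mem_filter.1 hk).2)
  have hj : CutExpand lt (K + N) (K.filter (lt · i) + j ::ₘ N) := by
    conv_lhs => rw [← Multiset.filter_add_not (lt · i) K, add_assoc]
    rw [← Multiset.singleton_add j]
    refine (cutExpand_add_left _).2 ((cutExpand_add_right _).2 (cutExpand_singleton fun k hk => ?_))
    obtain ⟨hkK, hki⟩ := Multiset.mem_filter.1 hk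
    exact (hK k hkK).resolve_left hki
  exact .head hj (.single hi)

namespace PeakDecreasing

variable {gt : L → L → Prop}

theorem joinable_of_labeledPath (hwf : WellFounded (fun a b => gt b a))
    (hpd : PeakDecreasing s gt) (h : LabeledPath (SymmLabeled s) M a b) :
    Joinable (fun x y => ∃ k, s k x y) a b := by
  induction M using hwf.cutExpand.transGen.induction generalizing a b with
  | _ M ih =>
  rcases h.valley_or_peak with hval | ⟨i, j, q, u, v, N₁, N₂, rfl, hau, hqu, hqv, hvb⟩
  · exact hval.joinable
  · obtain ⟨K, hK, huv⟩ := LabeledPath.exists_of_reflTransGen (fun _ _ h => h)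
      (hpd i j q u v hqu hqv)
    refine ih (K + (N₁ + N₂)) (cutExpand_transGen_of_lt_or_lt hK _) ?_
    simpa [add_left_comm] using hau.append (huv.append hvb)

theorem confluent (hwf : WellFounded (fun a b => gt b a)) (hpd : PeakDecreasing s gt) :
    Confluent (fun x y => ∃ k, s k x y) := by
  intro a b c hab hac
  have hlabel : ∀ x y, (∃ k, s k x y) → ∃ k, True ∧ s k x y :=
    fun _ _ ⟨k, hk⟩ => ⟨k, trivial, hk⟩
  obtain ⟨M₁, -, h₁⟩ := LabeledPath.exists_of_reflTransGen hlabel hab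
  obtain ⟨M₂, -, h₂⟩ := LabeledPath.exists_of_reflTransGen hlabel hac
  exact joinable_of_labeledPath hwf hpd (h₁.symmLabeled_reverse.append h₂.symmLabeled)

end PeakDecreasing

end LabeledARS

section SourceLabeling

variable {A : Type*}

def sourceLabel (r : A → A → Prop) (k x y : A) : Prop := r x y ∧ k = x

theorem exists_sourceLabel (r : A → A → Prop) : (fun x y => ∃ k, sourceLabel r k x y) = r := by
  ext x y
  simp [sourceLabel]

def SourceDecreasing (r : A → A → Prop) (gt : A → A → Prop) : Prop :=
  ∀ a b c, r a b → r a c → ReflTransGen (fun x y => (r x y ∧ gt a x) ∨ (r y x ∧ gt a y)) b c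

theorem SourceDecreasing.peakDecreasing {r gt : A → A → Prop} (hsd : SourceDecreasing r gt) :
    PeakDecreasing (sourceLabel r) gt := by
  rintro i j a b c ⟨hab, rfl⟩ ⟨hac, rfl⟩
  refine ReflTransGen.mono ?_ _ _ (hsd _ _ _ hab hac)
  rintro x y (⟨hxy, hx⟩ | ⟨hyx, hy⟩)
  · exact ⟨x, .inl hx, .inl ⟨hxy, rfl⟩⟩
  · exact ⟨y, .inl hy, .inr ⟨hyx, rfl⟩⟩

end SourceLabeling

theorem source_decreasing_peak_decreasing_and_confluent_general {A : Type _}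
    (r : A → A → Prop) (gt : A → A → Prop)
    (hwf : WellFounded (fun a b => gt b a))
    (hsd : ∀ a b c, r a b → r a c →
      Relation.ReflTransGen (fun x y => (r x y ∧ gt a x) ∨ (r y x ∧ gt a y)) b c) :
    (∀ (i j : A) (a b c : A), (r a b ∧ i = a) → (r a c ∧ j = a) →
      Relation.ReflTransGen
        (fun x y => ∃ k, (gt i k ∨ gt j k) ∧ ((r x y ∧ k = x) ∨ (r y x ∧ k = y))) b c) ∧
    Confluent r := by
  have hpd : PeakDecreasing (sourceLabel r) gt := SourceDecreasing.peakDecreasing hsd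
  exact ⟨hpd, exists_sourceLabel r ▸ hpd.confluent hwf⟩

/-- Every source decreasing ARS is peak decreasing (with source labeling),
and hence confluent. -/
theorem source_decreasing_peak_decreasing_and_confluent {A : Type _}
    (r : A → A → Prop) (gt : A → A → Prop) (htrans : Transitive gt)
    (hwf : WellFounded (fun a b => gt b a))
    (hsd : ∀ a b c, r a b → r a c →
      Relation.ReflTransGen (fun x y => (r x y ∧ gt a x) ∨ (r y x ∧ gt a y)) b c) :
    (∀ (i j : A) (a b c : A), (r a b ∧ i = a) → (r a c ∧ j = a) →
      Relation.ReflTransGen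
        (fun x y => ∃ k, (gt i k ∨ gt j k) ∧ ((r x y ∧ k = x) ∨ (r y x ∧ k = y))) b c) ∧
    Confluent r :=
  source_decreasing_peak_decreasing_and_confluent_general r gt hwf hsd

end KB
end

section
/- If R is a well-founded rewrite relation (closed under contexts and substitutions), then the relative relation (R ∪ ⊳)/⊵, i.e., ⊵* · (R ∪ ⊳) · ⊵*, is well-founded, where ⊵ is encompassment and ⊳ is proper encompassment. -/
namespace KB

variable {F V : Type}

/-!
Encompassment `⊵` is a preorder that commutes with every rewrite relation `R`: if `s = C[tσ]`
and `t →R u`, then `s →R C[uσ] ⊵ u`. So a step of `(R ∪ ⊳)/⊵` out of a term below `a` either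
can be replaced by an `R`-step out of `a`, or stays below `a` and descends in `⊳`; a nested
induction, on `R` from `a` and on `⊳` inside, gives well-foundedness.

`⊳` is well-founded by a lexicographic measure. If `s = C[tσ] ⊳ t`, either `t` has fewer
function symbols than `s`, or `C` is empty and `σ` renames the variables of `t`; the renaming
cannot be injective (else `t ⊵ s`), so `t` has fewer repeated variable occurrences than `s`.
-/

/-- The relative relation `R/E`, for `E` already reflexive and transitive. -/
def RelTo {α : Type*} (R E : α → α → Prop) (a b : α) : Prop :=
  ∃ c d, E a c ∧ R c d ∧ E d b

theorem wellFounded_relTo_of_commute {α : Type*} {E R : α → α → Prop} [IsPreorder α E]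
    (hcomm : ∀ {a b c}, E a b → R b c → ∃ d, R a d ∧ E d c)
    (hR : WellFounded (flip R)) (hE : WellFounded (flip fun a b => E a b ∧ ¬ E b a)) :
    WellFounded (flip (RelTo (fun a b => R a b ∨ E a b ∧ ¬ E b a) E)) := by
  suffices key : ∀ a b, E a b →
      Acc (flip (RelTo (fun a b => R a b ∨ E a b ∧ ¬ E b a) E)) b from
    ⟨fun a => key a a (refl_of E a)⟩
  intro a
  induction hR.apply a with | intro a _ ihR => ?_
  intro b
  induction hE.apply b with | intro b _ ihE => ?_
  intro hab
  refine ⟨_, fun c => ?_⟩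
  rintro ⟨x, y, hbx, hxy | ⟨hxy, hyx⟩, hyc⟩
  · obtain ⟨d, had, hdy⟩ := hcomm (trans_of E hab hbx) hxy
    exact ihR d had c (trans_of E hdy hyc)
  · have hbc : E b c := trans_of E (trans_of E hbx hxy) hyc
    exact ihE c ⟨hbc, fun hcb => hyx (trans_of E (trans_of E hyc hcb) hbx)⟩ (trans_of E hab hbc)

namespace Term

@[elab_as_elim]
theorem ind {motive : Term F V → Prop} (var : ∀ x, motive (.var x))
    (app : ∀ f ts, (∀ t ∈ ts, motive t) → motive (.app f ts)) : ∀ t, motive t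
  | .var x => var x
  | .app f ts => app f ts fun t _ => Term.ind var app t

def funCount : Term F V → ℕ
  | .var _ => 0
  | .app _ ts => (ts.map funCount).sum + 1

def vars : Term F V → List V
  | .var x => [x]
  | .app _ ts => ts.flatMap vars

@[simp]
theorem subst_var (σ : V → Term F V) (x : V) : (Term.var x).subst σ = σ x := by
  rw [Term.subst]

@[simp]
theorem subst_app (σ : V → Term F V) (f : F) (ts : List (Term F V)) :
    (Term.app f ts).subst σ = .app f (ts.map (·.subst σ)) := by
  rw [Term.subst]; simp

theorem subst_congr {σ τ : V → Term F V} {t : Term F V} (h : ∀ x ∈ t.vars, σ x = τ x) :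
    t.subst σ = t.subst τ := by
  induction t using Term.ind with
  | var x => simpa [vars] using h
  | app f ts ih =>
    simp only [subst_app, app.injEq, true_and]
    simp only [vars, List.mem_flatMap] at h
    exact List.map_congr_left fun u hu => ih u hu fun x hx => h x ⟨u, hu, hx⟩

@[simp]
theorem subst_var_eq_self (t : Term F V) : t.subst Term.var = t := by
  induction t using Term.ind with
  | var x => simp
  | app f ts ih => simpa using List.map_congr_left ih

theorem subst_subst (σ τ : V → Term F V) (t : Term F V) :
    (t.subst σ).subst τ = t.subst fun x => (σ x).subst τ := by
  induction t using Term.ind with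
  | var x => simp
  | app f ts ih => simpa using List.map_congr_left ih

theorem vars_subst (σ : V → Term F V) (t : Term F V) :
    (t.subst σ).vars = t.vars.flatMap fun x => (σ x).vars := by
  induction t using Term.ind with
  | var x => simp [vars]
  | app f ts ih =>
    simp only [subst_app, vars, List.flatMap_map, List.flatMap_assoc]
    exact List.flatMap_congr ih

theorem funCount_subst (σ : V → Term F V) (t : Term F V) :
    (t.subst σ).funCount = t.funCount + (t.vars.map fun x => (σ x).funCount).sum := by
  induction t using Term.ind with
  | var x => simp [funCount, vars]
  | app f ts ih =>
    simp only [subst_app, funCount, vars, List.flatMap_def, List.map_map, Function.comp_def,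
      List.map_congr_left ih, List.sum_map_add, List.map_flatten, List.sum_flatten]
    omega

theorem funCount_le_subst (σ : V → Term F V) (t : Term F V) :
    t.funCount ≤ (t.subst σ).funCount := by
  rw [funCount_subst]; omega

theorem funCount_eq_zero_iff {t : Term F V} : t.funCount = 0 ↔ ∃ x, t = .var x := by
  cases t <;> simp [funCount]

theorem exists_rename_of_funCount_subst_eq {σ : V → Term F V} {t : Term F V}
    (h : (t.subst σ).funCount = t.funCount) :
    ∃ ρ : V → V, ∀ x ∈ t.vars, σ x = .var (ρ x) := by
  have hvar : ∀ x ∈ t.vars, ∃ y, σ x = .var y := by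
    rw [funCount_subst, Nat.add_eq_left, List.sum_eq_zero_iff] at h
    simpa [funCount_eq_zero_iff] using h
  choose! ρ hρ using hvar
  exact ⟨ρ, hρ⟩

def repeatedVarCount [DecidableEq V] (t : Term F V) : ℕ :=
  t.vars.length - t.vars.toFinset.card

theorem vars_subst_of_rename {σ : V → Term F V} {ρ : V → V} {t : Term F V}
    (h : ∀ x ∈ t.vars, σ x = .var (ρ x)) : (t.subst σ).vars = t.vars.map ρ := by
  rw [vars_subst, List.map_eq_flatMap]
  exact List.flatMap_congr fun x hx => by rw [h x hx, vars]

end Term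

namespace Ctx

def subst (σ : V → Term F V) : Ctx F V → Ctx F V
  | .hole => .hole
  | .cons f l C r => .cons f (l.map (·.subst σ)) (C.subst σ) (r.map (·.subst σ))

def comp : Ctx F V → Ctx F V → Ctx F V
  | .hole, D => D
  | .cons f l C r, D => .cons f l (C.comp D) r

theorem fill_subst (σ : V → Term F V) (C : Ctx F V) (t : Term F V) :
    (C.fill t).subst σ = (C.subst σ).fill (t.subst σ) := by
  induction C with
  | hole => rfl
  | cons f l C r ih => simp [fill, subst, ih]

theorem fill_comp (C D : Ctx F V) (t : Term F V) : (C.comp D).fill t = C.fill (D.fill t) := by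
  induction C with
  | hole => rfl
  | cons f l C r ih => simp [comp, fill, ih]

theorem eq_hole_or_funCount_lt_fill (C : Ctx F V) (t : Term F V) :
    C = .hole ∨ t.funCount < (C.fill t).funCount := by
  induction C with
  | hole => exact .inl rfl
  | cons f l C r ih =>
    have hle : t.funCount ≤ (C.fill t).funCount := by
      rcases ih with rfl | hlt
      exacts [le_rfl, hlt.le]
    right
    simp only [fill, Term.funCount, List.map_append, List.map_cons, List.sum_append,
      List.sum_cons]
    omega

end Ctx

instance : IsPreorder (Term F V) Encompass where
  refl t := ⟨.hole, .var, (Term.subst_var_eq_self t).symm⟩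
  trans := by
    rintro s t u ⟨C, σ, rfl⟩ ⟨D, τ, rfl⟩
    refine ⟨C.comp (D.subst σ), fun x => (τ x).subst σ, ?_⟩
    rw [Ctx.fill_comp, ← Term.subst_subst, ← Ctx.fill_subst]

theorem Encompass.exists_rel_of_rel {R : Term F V → Term F V → Prop}
    (hctx : ∀ (C : Ctx F V) (s t : Term F V), R s t → R (C.fill s) (C.fill t))
    (hsub : ∀ (σ : V → Term F V) (s t : Term F V), R s t → R (s.subst σ) (t.subst σ))
    {s t u : Term F V} (hst : Encompass s t) (htu : R t u) : ∃ v, R s v ∧ Encompass v u := by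
  obtain ⟨C, σ, rfl⟩ := hst
  exact ⟨C.fill (u.subst σ), hctx C _ _ (hsub σ _ _ htu), C, σ, rfl⟩

theorem encompass_subst_of_injOn {σ : V → Term F V} {ρ : V → V} {t : Term F V}
    (hρ : ∀ x ∈ t.vars, σ x = .var (ρ x)) (hinj : Set.InjOn ρ {x | x ∈ t.vars}) :
    Encompass t (t.subst σ) := by
  -- `invFunOn` needs `Nonempty V`, which its argument witnesses.
  refine ⟨.hole, fun y =>
    have : Nonempty V := ⟨y⟩; .var (Function.invFunOn ρ {x | x ∈ t.vars} y), ?_⟩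
  conv_lhs => rw [← t.subst_var_eq_self]
  rw [Ctx.fill, Term.subst_subst]
  refine Term.subst_congr fun x hx => ?_
  have : Nonempty V := ⟨x⟩
  rw [hρ x hx, Term.subst_var]
  exact congrArg Term.var (hinj.leftInvOn_invFunOn hx).symm

theorem PEncompass.lex_lt [DecidableEq V] {s t : Term F V} (h : PEncompass s t) :
    Prod.Lex (· < ·) (· < ·) (t.funCount, t.repeatedVarCount)
      (s.funCount, s.repeatedVarCount) := by
  obtain ⟨⟨C, σ, rfl⟩, hnot⟩ := h
  rcases C.eq_hole_or_funCount_lt_fill (t.subst σ) with rfl | hC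
  · rcases (t.funCount_le_subst σ).lt_or_eq with hlt | heq
    · exact .left _ _ hlt
    obtain ⟨ρ, hρ⟩ := Term.exists_rename_of_funCount_subst_eq heq.symm
    have himage : (t.vars.map ρ).toFinset = t.vars.toFinset.image ρ := by ext; simp
    have hcard : (t.vars.toFinset.image ρ).card < t.vars.toFinset.card :=
      Finset.card_image_le.lt_of_ne fun h => hnot <| encompass_subst_of_injOn hρ <| by
        simpa using Finset.injOn_of_card_image_eq h
    rw [Ctx.fill, heq]
    refine .right _ ?_
    rw [Term.repeatedVarCount, Term.repeatedVarCount, Term.vars_subst_of_rename hρ,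
      List.length_map, himage]
    have := t.vars.toFinset_card_le
    omega
  · exact .left _ _ ((t.funCount_le_subst σ).trans_lt hC)

theorem wellFounded_pencompass :
    WellFounded (flip (PEncompass : Term F V → Term F V → Prop)) := by
  classical
  exact Subrelation.wf (fun h => PEncompass.lex_lt h)
    (InvImage.wf (fun t : Term F V => (t.funCount, t.repeatedVarCount))
      (WellFounded.prod_lex wellFounded_lt wellFounded_lt))

/-- If R is a well-founded rewrite relation then (R ∪ ⊳)/⊵ is well-founded. -/
theorem wf_encomp_relto {F V : Type} (R : Term F V → Term F V → Prop)
    (hctx : ∀ (C : Ctx F V) (s t : Term F V), R s t → R (C.fill s) (C.fill t))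
    (hsub : ∀ (σ : V → Term F V) (s t : Term F V), R s t → R (s.subst σ) (t.subst σ))
    (hwf : WellFounded (fun a b => R b a)) :
    WellFounded (fun a b : Term F V =>
      ∃ c d, Relation.ReflTransGen Encompass b c ∧ (R c d ∨ PEncompass c d) ∧
        Relation.ReflTransGen Encompass d a) := by
  simp only [Relation.reflTransGen_eq_self]
  exact wellFounded_relTo_of_commute (fun hst htu => hst.exists_rel_of_rel hctx hsub htu) hwf
    wellFounded_pencompass

end KB
end

section
/- Let A and B be ARSs with NF(B) ⊆ NF(A) such that either (1) →_B ⊆ →_A^+, or (2) →_B ⊆ ↔_A* and B is terminating. If A is complete (terminating and confluent), then B is complete and normalization equivalent to A (i.e., →_A^! = →_B^!). -/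
namespace KB

variable {F V : Type}

/-!
Both hypotheses make `→_B` terminating and contained in `↔_A*`. By confluence of `A`, a
conversion ending in an `A`-normal form reduces to it, so every `B`-normal form of `a`, being an
`A`-normal form, is the unique `A`-normal form of `a`. Hence `B`-normal forms are unique, which
for a terminating system is confluence, and normalization in `B` and in `A` agree.
-/

section ARS

open Relation

variable {α : Type _} {r s : α → α → Prop} {a b c : α}

theorem Terminating.of_le_transGen (hr : Terminating r)
    (hsr : ∀ a b, s a b → TransGen r a b) : Terminating s :=
  Subrelation.wf (fun h => transGen_swap.1 (hsr _ _ h)) hr.transGen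

theorem conv_of_reflTransGen (hsr : ∀ a b, s a b → Conv r a b) (h : ReflTransGen s a b) :
    Conv r a b :=
  h.lift' id hsr

theorem NF.eq_of_reflTransGen (ha : NF r a) (h : ReflTransGen r a b) : a = b :=
  h.cases_head.resolve_right fun ⟨c, hac, _⟩ => ha c hac

theorem Confluent.joinable_of_conv (hr : Confluent r) (h : Conv r a b) : Joinable r a b := by
  have hjoin : Equivalence (Join (ReflTransGen r)) := equivalence_join hr
  refine reflTransGen_le_of_equivalence_of_le hjoin (fun a b hab => ?_) a b h
  rcases hab with hab | hba
  · exact ⟨b, .single hab, .refl⟩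
  · exact ⟨a, .refl, .single hba⟩

theorem Confluent.normTo_of_conv (hr : Confluent r) (h : Conv r a b) (hb : NF r b) :
    NormTo r a b := by
  obtain ⟨c, hac, hbc⟩ := hr.joinable_of_conv h
  exact ⟨hb.eq_of_reflTransGen hbc ▸ hac, hb⟩

theorem Confluent.normTo_unique (hr : Confluent r) (hb : NormTo r a b) (hc : NormTo r a c) :
    b = c := by
  obtain ⟨d, hbd, hcd⟩ := hr a b c hb.1 hc.1
  rw [hb.2.eq_of_reflTransGen hbd, hc.2.eq_of_reflTransGen hcd]

theorem Terminating.exists_normTo (hr : Terminating r) (a : α) : ∃ b, NormTo r a b := by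
  induction a using hr.induction with
  | _ a ih =>
    by_cases ha : NF r a
    · exact ⟨a, .refl, ha⟩
    · obtain ⟨b, hab⟩ : ∃ b, r a b := by simpa [NF] using ha
      obtain ⟨c, hbc, hc⟩ := ih b hab
      exact ⟨c, .head hab hbc, hc⟩

theorem Terminating.confluent_of_normTo_unique (hr : Terminating r)
    (huniq : ∀ a b c, NormTo r a b → NormTo r a c → b = c) : Confluent r := by
  intro a b c hab hac
  obtain ⟨b', hbb', hb'⟩ := hr.exists_normTo b
  obtain ⟨c', hcc', hc'⟩ := hr.exists_normTo c
  have hbc' : b' = c' := huniq a b' c' ⟨hab.trans hbb', hb'⟩ ⟨hac.trans hcc', hc'⟩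
  exact ⟨b', hbb', hbc' ▸ hcc'⟩

theorem normTo_iff_of_normTo_le (hs : Terminating s) (hr : Confluent r)
    (hsr : ∀ a b, NormTo s a b → NormTo r a b) : NormTo r a b ↔ NormTo s a b := by
  refine ⟨fun hab => ?_, hsr a b⟩
  obtain ⟨c, hac⟩ := hs.exists_normTo a
  rwa [hr.normTo_unique hab (hsr a c hac)]

end ARS

/-- If NF(B) ⊆ NF(A), and either →B ⊆ →A⁺ or (→B ⊆ ↔A* and B terminating),
and A is complete, then B is complete and normalization equivalent to A. -/
theorem complete_normalization_equivalent {A : Type _} (rA rB : A → A → Prop)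
    (hNF : ∀ a, NF rB a → NF rA a)
    (hcase : (∀ a b, rB a b → Relation.TransGen rA a b) ∨
             ((∀ a b, rB a b → Conv rA a b) ∧ Terminating rB))
    (hA : Complete rA) :
    Complete rB ∧ ∀ a b, NormTo rA a b ↔ NormTo rB a b := by
  obtain ⟨hAterm, hAconf⟩ := hA
  obtain ⟨hconv, hBterm⟩ : (∀ a b, rB a b → Conv rA a b) ∧ Terminating rB := by
    rcases hcase with hplus | hB
    · refine ⟨fun a b hab => ?_, hAterm.of_le_transGen hplus⟩
      exact conv_of_reflTransGen (fun _ _ h => .single (.inl h)) (hplus a b hab).to_reflTransGen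
    · exact hB
  have hBA : ∀ a b, NormTo rB a b → NormTo rA a b := fun a b ⟨hab, hb⟩ =>
    hAconf.normTo_of_conv (conv_of_reflTransGen hconv hab) (hNF b hb)
  have hBconf : Confluent rB := hBterm.confluent_of_normTo_unique fun a b c hb hc =>
    hAconf.normTo_unique (hBA a b hb) (hBA a c hc)
  exact ⟨⟨hBterm, hBconf⟩, fun a b => normTo_iff_of_normTo_le hBterm hAconf hBA⟩

end KB
end

section
/- Normalization equivalent terminating ARSs are conversion equivalent: if →_A^! = →_B^! and both A and B are terminating, then ↔_A* = ↔_B*. -/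
namespace KB

variable {F V : Type}

/-!
If `r` terminates, every step `a → b` extends to a normalization `a →! c` through a normal form
`c` of `b`. When `→!_r ⊆ →!_s`, both `a` and `b` then `s`-reduce to `c`, so each `r`-step is an
`s`-conversion, and hence so is each `r`-conversion. Apply this in both directions.
-/

theorem exists_normTo_of_terminating {α : Type _} {r : α → α → Prop} (hr : Terminating r)
    (a : α) : ∃ c, NormTo r a c := by
  induction a using hr.induction with
  | _ a ih =>
    by_cases ha : NF r a
    · exact ⟨a, .refl, ha⟩
    · obtain ⟨b, hab⟩ := not_forall_not.mp ha
      obtain ⟨c, hbc, hc⟩ := ih b hab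
      exact ⟨c, .head hab hbc, hc⟩

theorem Conv.symm {α : Type _} {r : α → α → Prop} {a b : α} (h : Conv r a b) : Conv r b a :=
  Relation.ReflTransGen.mono (fun _ _ => Or.symm) _ _ (Relation.ReflTransGen.swap _ _ h)

theorem Conv.of_reflTransGen {α : Type _} {r : α → α → Prop} {a b : α}
    (h : Relation.ReflTransGen r a b) : Conv r a b :=
  Relation.ReflTransGen.mono (fun _ _ => Or.inl) _ _ h

theorem conv_of_step_of_normTo_imp {α : Type _} {r s : α → α → Prop} (hr : Terminating r)
    (hrs : ∀ a b, NormTo r a b → NormTo s a b) {a b : α} (hab : r a b) : Conv s a b := by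
  obtain ⟨c, hbc, hc⟩ := exists_normTo_of_terminating hr b
  have hac_s : NormTo s a c := hrs a c ⟨.head hab hbc, hc⟩
  have hbc_s : NormTo s b c := hrs b c ⟨hbc, hc⟩
  exact (Conv.of_reflTransGen hac_s.1).trans (Conv.of_reflTransGen hbc_s.1).symm

theorem Conv.of_normTo_imp {α : Type _} {r s : α → α → Prop} (hr : Terminating r)
    (hrs : ∀ a b, NormTo r a b → NormTo s a b) {a b : α} (h : Conv r a b) : Conv s a b :=
  h.lift' id fun _ _ hab => hab.elim (conv_of_step_of_normTo_imp hr hrs)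
    fun hba => (conv_of_step_of_normTo_imp hr hrs hba).symm

/-- Normalization equivalent terminating ARSs are conversion equivalent. -/
theorem normalization_equiv_imp_conv_equiv {A : Type _} (rA rB : A → A → Prop)
    (hA : Terminating rA) (hB : Terminating rB)
    (hNE : ∀ a b, NormTo rA a b ↔ NormTo rB a b) :
    ∀ a b, Conv rA a b ↔ Conv rB a b := fun _ _ =>
  ⟨Conv.of_normTo_imp hA fun a b => (hNE a b).mp, Conv.of_normTo_imp hB fun a b => (hNE a b).mpr⟩

end KB
end

section
/- In an ARS with random descent, if a ↔* b for some normal form b, then a is terminating and confluent, and all rewrite sequences from a to b have the same length. -/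
namespace KB

variable {F V : Type}

section Aux

variable {α : Type _} {r : α → α → Prop}

lemma convN_cast {l m l' m' : ℕ} {a b : α} (h : ConvN r l m a b)
    (hl : l = l') (hm : m = m') : ConvN r l' m' a b := by subst hl; subst hm; exact h

lemma convN_append {l₁ m₁ l₂ m₂ : ℕ} {a b c : α}
    (h₁ : ConvN r l₁ m₁ a b) (h₂ : ConvN r l₂ m₂ b c) :
    ConvN r (l₁ + l₂) (m₁ + m₂) a c := by
  induction h₁ with
  | refl => exact convN_cast h₂ (by omega) (by omega)
  | fwd h _ ih => exact convN_cast (ConvN.fwd h (ih h₂)) (by omega) (by omega)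
  | bwd h _ ih => exact convN_cast (ConvN.bwd h (ih h₂)) (by omega) (by omega)

lemma convN_reverse {l m : ℕ} {a b : α} (h : ConvN r l m a b) : ConvN r m l b a := by
  induction h with
  | refl => exact ConvN.refl _
  | fwd h _ ih =>
      exact convN_cast (convN_append ih (ConvN.bwd h (ConvN.refl _))) rfl rfl
  | bwd h _ ih =>
      exact convN_cast (convN_append ih (ConvN.fwd h (ConvN.refl _))) rfl rfl

lemma stepsN_convN {n : ℕ} {a b : α} (h : StepsN r n a b) : ConvN r 0 n a b := by
  induction h with
  | refl => exact ConvN.refl _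
  | step h _ ih => exact ConvN.fwd h ih

lemma stepsN_rtg {n : ℕ} {a b : α} (h : StepsN r n a b) :
    Relation.ReflTransGen r a b := by
  induction h with
  | refl => exact .refl
  | step h _ ih => exact .head h ih

lemma rtg_stepsN {a b : α} (h : Relation.ReflTransGen r a b) :
    ∃ n, StepsN r n a b := by
  induction h with
  | refl => exact ⟨0, StepsN.refl _⟩
  | tail _ h ih =>
      obtain ⟨n, hn⟩ := ih
      clear * - hn h
      induction hn with
      | refl => exact ⟨1, StepsN.step h (StepsN.refl _)⟩
      | step h' _ ih =>
          obtain ⟨k, hk⟩ := ih h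
          exact ⟨k + 1, StepsN.step h' hk⟩

lemma conv_convN {a b : α} (h : Conv r a b) : ∃ l m, ConvN r l m a b := by
  induction h with
  | refl => exact ⟨0, 0, ConvN.refl _⟩
  | tail _ h ih =>
      obtain ⟨l, m, hlm⟩ := ih
      rcases h with h | h
      · exact ⟨l, m + 1, convN_cast (convN_append hlm (ConvN.fwd h (ConvN.refl _))) rfl rfl⟩
      · exact ⟨l + 1, m, convN_cast (convN_append hlm (ConvN.bwd h (ConvN.refl _))) rfl rfl⟩

end Aux

/-- In an ARS with random descent, an element convertible to a normal form b is
terminating and confluent, and all rewrite sequences to b have the same length. -/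
theorem random_descent_properties {A : Type _} (r : A → A → Prop)
    (hRD : RandomDescent r) (a b : A) (hconv : Conv r a b) (hb : NF r b) :
    Acc (fun x y => r y x) a ∧
    (∀ c d, Relation.ReflTransGen r a c → Relation.ReflTransGen r a d →
      Joinable r c d) ∧
    (∀ m n, StepsN r m a b → StepsN r n a b → m = n) := by
  have rtg_conv : ∀ c d : A, Relation.ReflTransGen r c d → Conv r d c := by
    intro c d h
    induction h with
    | refl => exact Relation.ReflTransGen.refl
    | tail _ h ih => exact Relation.ReflTransGen.head (Or.inr h) ih
  have reduce : ∀ c, Conv r c b → ∃ n, StepsN r n c b := by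
    intro c hc
    obtain ⟨l, m, hlm⟩ := conv_convN hc
    obtain ⟨n, hn, -⟩ := hRD l m c b hlm hb
    exact ⟨n, hn⟩
  have acc : ∀ n c, StepsN r n c b → Acc (fun x y => r y x) c := by
    intro n
    induction n using Nat.strong_induction_on with
    | _ n ih =>
      intro c hc
      constructor
      intro d hd
      have hconv' : ConvN r 1 n d b := ConvN.bwd hd (stepsN_convN hc)
      obtain ⟨k, hk, hke⟩ := hRD 1 n d b hconv' hb
      exact ih k (by omega) d hk
  obtain ⟨n₀, hn₀⟩ := reduce a hconv
  refine ⟨acc n₀ a hn₀, ?_, ?_⟩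
  · intro c d hac had
    obtain ⟨nc, hc⟩ := reduce c (Relation.ReflTransGen.trans (rtg_conv a c hac) hconv)
    obtain ⟨nd, hd⟩ := reduce d (Relation.ReflTransGen.trans (rtg_conv a d had) hconv)
    exact ⟨b, stepsN_rtg hc, stepsN_rtg hd⟩
  · intro m n hm hn
    have hmn : ConvN r m n b b :=
      convN_cast (convN_append (convN_reverse (stepsN_convN hm)) (stepsN_convN hn))
        (by omega) (by omega)
    obtain ⟨k, hk, hke⟩ := hRD m n b b hmn hb
    cases hk with
    | refl => omega
    | step h _ => exact absurd h (hb _)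

end KB
end

section
/- Every left-reduced ground TRS has random descent: for every conversion s ↔* t with t a normal form, s →^n t where n + l = r with l and r the numbers of backward and forward steps in the conversion. -/
namespace KB

variable {F V : Type}

-- Auxiliary lemmas

theorem Ground.subst_eq {t : Term F V} (h : Ground t) (σ : V → Term F V) :
    t.subst σ = t := by
  induction h with
  | app hts ih =>
    rw [Term.subst]
    congr 1
    calc _ = List.map (fun t => t.1) (List.attach _) :=
          List.map_congr_left (fun t _ => ih t.1 t.2)
      _ = _ := List.attach_map_subtype_val _

theorem sizeOf_le_fill (C : Ctx F V) (t : Term F V) : sizeOf t ≤ sizeOf (C.fill t) := by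
  induction C with
  | hole => simp [Ctx.fill]
  | cons f l C r ih =>
    have h1 : C.fill t ∈ l ++ C.fill t :: r := by simp
    have := List.sizeOf_lt_of_mem h1
    simp only [Ctx.fill, Term.app.sizeOf_spec]
    omega

theorem list_split {α : Type _} (l1 : List α) : ∀ (l2 : List α) (a b : α) (r1 r2 : List α),
    l1 ++ a :: r1 = l2 ++ b :: r2 →
    (l1 = l2 ∧ a = b ∧ r1 = r2) ∨
    (∃ m, l2 = l1 ++ a :: m ∧ r1 = m ++ b :: r2) ∨
    (∃ m, l1 = l2 ++ b :: m ∧ r2 = m ++ a :: r1) := by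
  induction l1 with
  | nil =>
    intro l2 a b r1 r2 h
    cases l2 with
    | nil => simp_all
    | cons c l2' =>
      simp only [List.nil_append, List.cons_append, List.cons.injEq] at h
      right; left; exact ⟨l2', by simp [h.1], h.2⟩
  | cons c l1' ih =>
    intro l2 a b r1 r2 h
    cases l2 with
    | nil =>
      simp only [List.nil_append, List.cons_append, List.cons.injEq] at h
      right; right; exact ⟨l1', by simp [h.1], h.2.symm⟩
    | cons d l2' =>
      simp only [List.cons_append, List.cons.injEq] at h
      obtain ⟨rfl, h2⟩ := h
      rcases ih l2' a b r1 r2 h2 with ⟨rfl, rfl, rfl⟩ | ⟨m, rfl, rfl⟩ | ⟨m, rfl, rfl⟩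
      · left; exact ⟨rfl, rfl, rfl⟩
      · right; left; exact ⟨m, by simp, rfl⟩
      · right; right; exact ⟨m, by simp, rfl⟩

theorem step_ctx {R : TRS F V} {a b : Term F V} (h : Step R a b)
    (f : F) (l r : List (Term F V)) :
    Step R (Term.app f (l ++ a :: r)) (Term.app f (l ++ b :: r)) := by
  obtain ⟨C, σ, lh, rh, hmem, rfl, rfl⟩ := h
  exact ⟨Ctx.cons f l C r, σ, lh, rh, hmem, rfl, rfl⟩

/-- A lhs of a rule cannot properly contain a redex. -/
theorem root_inner_absurd {R : TRS F V} (hG : GroundSys R) (hLR : LeftReduced R)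
    {l1 r1 l2 r2 : Term F V} (m1 : (l1, r1) ∈ R) (m2 : (l2, r2) ∈ R)
    {g : F} {ls rs : List (Term F V)} {C : Ctx F V}
    (h : l1 = Term.app g (ls ++ C.fill l2 :: rs)) : False := by
  have g2 : Ground l2 := (hG _ m2).1
  have g2r : Ground r2 := (hG _ m2).2
  by_cases hne : (l2, r2) = (l1, r1)
  · -- the same rule nested properly inside itself: size contradiction
    rw [(Prod.mk.inj hne).1] at h
    have h1 : C.fill l1 ∈ ls ++ C.fill l1 :: rs := by simp
    have h2 := List.sizeOf_lt_of_mem h1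
    have h3 := sizeOf_le_fill C l1
    have h4 : sizeOf l1 = sizeOf (Term.app g (ls ++ C.fill l1 :: rs)) := by rw [← h]
    simp only [Term.app.sizeOf_spec] at h4
    omega
  · -- a different rule reduces l1: contradicts left-reducedness
    exact hLR _ m1 ((Ctx.cons g ls C rs).fill r2)
      ⟨Ctx.cons g ls C rs, Term.var, l2, r2, ⟨m2, by simpa using hne⟩,
        by simp [Ctx.fill, h, Ground.subst_eq g2], by simp [Ctx.fill, Ground.subst_eq g2r]⟩

/-- Balanced local diamond: every peak is either trivial or joinable in one step each. -/
theorem diamond_eq {R : TRS F V} (hG : GroundSys R) (hLR : LeftReduced R) :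
    ∀ s t u, Step R s t → Step R s u → t = u ∨ ∃ v, Step R t v ∧ Step R u v := by
  have main : ∀ n s t u, sizeOf s ≤ n → Step R s t → Step R s u →
      t = u ∨ ∃ v, Step R t v ∧ Step R u v := by
    intro n
    induction n using Nat.strong_induction_on with
    | _ n ih =>
      rintro s t u hsz ⟨C1, σ1, l1, r1, m1, hs1, ht1⟩ ⟨C2, σ2, l2, r2, m2, hs2, ht2⟩
      have g1l : Ground l1 := (hG _ m1).1; have g1r : Ground r1 := (hG _ m1).2
      have g2l : Ground l2 := (hG _ m2).1; have g2r : Ground r2 := (hG _ m2).2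
      rw [Ground.subst_eq g1l] at hs1
      rw [Ground.subst_eq g1r] at ht1
      rw [Ground.subst_eq g2l] at hs2
      rw [Ground.subst_eq g2r] at ht2
      cases C1 with
      | hole =>
        cases C2 with
        | hole =>
          -- both root steps
          simp only [Ctx.fill] at hs1 hs2 ht1 ht2
          by_cases hr : r1 = r2
          · left; rw [ht1, ht2, hr]
          · exfalso
            refine hLR _ m1 r2 ⟨Ctx.hole, Term.var, l2, r2, ⟨m2, ?_⟩, ?_, ?_⟩
            · simp only [Set.mem_singleton_iff]
              intro he
              exact hr (Prod.mk.inj he).2.symm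
            · show l1 = Ctx.hole.fill (l2.subst Term.var)
              simp only [Ctx.fill, Ground.subst_eq g2l]
              exact hs1.symm.trans hs2
            · show r2 = Ctx.hole.fill (r2.subst Term.var)
              simp [Ctx.fill, Ground.subst_eq g2r]
        | cons g ls C2' rs =>
          exfalso
          simp only [Ctx.fill] at hs1 hs2
          exact root_inner_absurd hG hLR m1 m2 (hs1.symm.trans hs2)
      | cons f ls1 C1' rs1 =>
        cases C2 with
        | hole =>
          exfalso
          simp only [Ctx.fill] at hs1 hs2
          exact root_inner_absurd hG hLR m2 m1 (hs2.symm.trans hs1)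
        | cons g ls2 C2' rs2 =>
          simp only [Ctx.fill] at hs1 hs2 ht1 ht2
          have hfg : f = g ∧ ls1 ++ C1'.fill l1 :: rs1 = ls2 ++ C2'.fill l2 :: rs2 := by
            have := hs1.symm.trans hs2
            exact ⟨(Term.app.injEq .. ▸ this).1, (Term.app.injEq .. ▸ this).2⟩
          obtain ⟨rfl, hlist⟩ := hfg
          rcases list_split ls1 ls2 _ _ rs1 rs2 hlist with
            ⟨rfl, hx, rfl⟩ | ⟨m, rfl, rfl⟩ | ⟨m, rfl, rfl⟩
          · -- same position in the list: recurse on the subterm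
            have hsz' : sizeOf (C1'.fill l1) < n := by
              have h1 : C1'.fill l1 ∈ ls1 ++ C1'.fill l1 :: rs1 := by simp
              have h2 := List.sizeOf_lt_of_mem h1
              have : sizeOf s = sizeOf (Term.app f (ls1 ++ C1'.fill l1 :: rs1)) := by
                rw [← hs1]
              simp only [Term.app.sizeOf_spec] at this
              omega
            have st1 : Step R (C1'.fill l1) (C1'.fill r1) :=
              ⟨C1', σ1, l1, r1, m1, by rw [Ground.subst_eq g1l], by rw [Ground.subst_eq g1r]⟩
            have st2 : Step R (C1'.fill l1) (C2'.fill r2) :=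
              ⟨C2', σ2, l2, r2, m2, by rw [Ground.subst_eq g2l, hx],
                by rw [Ground.subst_eq g2r]⟩
            rcases ih _ hsz' _ _ _ le_rfl st1 st2 with heq | ⟨v', hv1, hv2⟩
            · left; rw [ht1, ht2, heq]
            · right
              refine ⟨Term.app f (ls1 ++ v' :: rs1), ?_, ?_⟩
              · rw [ht1]; exact step_ctx hv1 f ls1 rs1
              · rw [ht2]; exact step_ctx hv2 f ls1 rs1
          · -- parallel positions, first left of second
            right
            refine ⟨Term.app f (ls1 ++ C1'.fill r1 :: m ++ C2'.fill r2 :: rs2), ?_, ?_⟩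
            · rw [ht1]
              have st2 : Step R (C2'.fill l2) (C2'.fill r2) :=
                ⟨C2', σ2, l2, r2, m2, by rw [Ground.subst_eq g2l],
                  by rw [Ground.subst_eq g2r]⟩
              have := step_ctx st2 f (ls1 ++ C1'.fill r1 :: m) rs2
              simpa using this
            · rw [ht2]
              have st1 : Step R (C1'.fill l1) (C1'.fill r1) :=
                ⟨C1', σ1, l1, r1, m1, by rw [Ground.subst_eq g1l],
                  by rw [Ground.subst_eq g1r]⟩
              have := step_ctx st1 f ls1 (m ++ C2'.fill r2 :: rs2)
              simpa using this
          · -- parallel positions, second left of first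
            right
            refine ⟨Term.app f (ls2 ++ C2'.fill r2 :: m ++ C1'.fill r1 :: rs1), ?_, ?_⟩
            · rw [ht1]
              have st2 : Step R (C2'.fill l2) (C2'.fill r2) :=
                ⟨C2', σ2, l2, r2, m2, by rw [Ground.subst_eq g2l],
                  by rw [Ground.subst_eq g2r]⟩
              have := step_ctx st2 f ls2 (m ++ C1'.fill r1 :: rs1)
              simpa using this
            · rw [ht2]
              have st1 : Step R (C1'.fill l1) (C1'.fill r1) :=
                ⟨C1', σ1, l1, r1, m1, by rw [Ground.subst_eq g1l],
                  by rw [Ground.subst_eq g1r]⟩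
              have := step_ctx st1 f (ls2 ++ C2'.fill r2 :: m) rs1
              simpa using this
  intro s t u h1 h2
  exact main (sizeOf s) s t u le_rfl h1 h2

/-- From the balanced diamond: peeling a step off a normalizing sequence. -/
theorem back_step {α : Type _} {r : α → α → Prop}
    (h : ∀ a b c, r a b → r a c → b = c ∨ ∃ d, r b d ∧ r c d) :
    ∀ {n a b c}, StepsN r n a b → NF r b → r a c → ∃ k, StepsN r k c b ∧ k + 1 = n := by
  intro n a b c hs
  induction hs generalizing c with
  | refl a => intro hnf hr; exact absurd hr (hnf c)
  | @step n a a' b hr hs ih =>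
    intro hnf hc
    rcases h a a' c hr hc with rfl | ⟨d, hd1, hd2⟩
    · exact ⟨n, hs, rfl⟩
    · obtain ⟨k, sk, hk⟩ := ih hnf hd1
      exact ⟨k + 1, .step hd2 sk, by omega⟩

/-- Left-reduced ground TRSs have random descent. -/
theorem left_reduced_ground_random_descent {F V : Type} (R : TRS F V)
    (hG : GroundSys R) (hLR : LeftReduced R) :
    RandomDescent (Step R) := by
  have dia := diamond_eq hG hLR
  intro l m a b hconv hnf
  induction hconv with
  | refl a => exact ⟨0, .refl a, rfl⟩
  | fwd h hc ih =>
    obtain ⟨n, sn, he⟩ := ih hnf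
    exact ⟨n + 1, .step h sn, by omega⟩
  | bwd h hc ih =>
    obtain ⟨n, sn, he⟩ := ih hnf
    obtain ⟨k, sk, hk⟩ := back_step dia sn hnf h
    exact ⟨k, sk, by omega⟩

end KB
end

section
/- Every right-reduced ground TRS is terminating. -/
namespace KB

variable {F V : Type}

/-!
Count the reducible subterm occurrences. For a ground rule `l → r` a step `C[l] → C[r]` with `r`
a normal form removes the redex at the hole, creates no reducible occurrence inside `r`, leaves
the occurrences beside the hole untouched, and cannot make an occurrence above the hole
reducible that was not reducible already (it contained the redex `l`). So the count strictly
decreases along every step; the same holds whenever all instances `rσ` are normal forms.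
-/

def Ctx.comp_s14 : Ctx F V → Ctx F V → Ctx F V
  | .hole, D => D
  | .cons f l C r, D => .cons f l (C.comp_s14 D) r

theorem Ctx.fill_comp_s14 (C D : Ctx F V) (t : Term F V) :
    (C.comp_s14 D).fill t = C.fill (D.fill t) := by
  induction C with
  | hole => rfl
  | cons f l C r ih => simp [Ctx.comp_s14, Ctx.fill, ih]

theorem Step.fill {R : TRS F V} {s t : Term F V} (C : Ctx F V) (h : Step R s t) :
    Step R (C.fill s) (C.fill t) := by
  obtain ⟨D, σ, l, r, hmem, rfl, rfl⟩ := h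
  exact ⟨C.comp_s14 D, σ, l, r, hmem, (Ctx.fill_comp_s14 ..).symm, (Ctx.fill_comp_s14 ..).symm⟩

theorem NF.of_mem_args {R : TRS F V} {f : F} {ts : List (Term F V)} {t : Term F V}
    (h : NF (Step R) (Term.app f ts)) (ht : t ∈ ts) : NF (Step R) t := by
  obtain ⟨l, r, rfl⟩ := List.append_of_mem ht
  exact fun u hu => h _ (hu.fill (Ctx.cons f l Ctx.hole r))

open Classical in
noncomputable def redexCount (R : TRS F V) : Term F V → ℕ
  | .var x => if NF (Step R) (.var x) then 0 else 1
  | .app f ts =>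
      (if NF (Step R) (.app f ts) then 0 else 1) + (ts.attach.map fun t => redexCount R t.1).sum
decreasing_by
  simp only [Term.app.sizeOf_spec]
  have := List.sizeOf_lt_of_mem t.2
  omega

section redexCount

variable {R : TRS F V}

open Classical in
theorem redexCount_app (f : F) (ts : List (Term F V)) :
    redexCount R (.app f ts) =
      (if NF (Step R) (.app f ts) then 0 else 1) + (ts.map (redexCount R)).sum := by
  rw [redexCount, List.attach_map_val]

theorem redexCount_eq_zero_of_nf : ∀ {t : Term F V}, NF (Step R) t → redexCount R t = 0
  | .var x, h => by rw [redexCount, if_pos h]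
  | .app f ts, h => by
      rw [redexCount_app, if_pos h, zero_add]
      refine List.sum_eq_zero fun _ hn => ?_
      obtain ⟨t, ht, rfl⟩ := List.mem_map.mp hn
      exact redexCount_eq_zero_of_nf (h.of_mem_args ht)
decreasing_by
  simp only [Term.app.sizeOf_spec]
  have := List.sizeOf_lt_of_mem ht
  omega

theorem redexCount_pos_of_not_nf {t : Term F V} (h : ¬ NF (Step R) t) : 0 < redexCount R t := by
  cases t with
  | var x => rw [redexCount, if_neg h]; exact one_pos
  | app f ts => rw [redexCount_app, if_neg h]; omega

theorem redexCount_fill_lt {s t : Term F V} (C : Ctx F V) (hs : ¬ NF (Step R) s)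
    (h : redexCount R t < redexCount R s) :
    redexCount R (C.fill t) < redexCount R (C.fill s) := by
  classical
  induction C with
  | hole => exact h
  | cons f l C r ih =>
    have hCs : ¬ NF (Step R) (Ctx.fill (.cons f l C r) s) := fun hnf =>
      hs fun u hu => hnf _ (hu.fill (.cons f l C r))
    simp only [Ctx.fill] at hCs ⊢
    simp only [redexCount_app, if_neg hCs, List.map_append, List.map_cons, List.sum_append,
      List.sum_cons]
    split <;> omega

theorem redexCount_lt_of_step (hR : ∀ p ∈ R, ∀ σ, NF (Step R) (p.2.subst σ)) {s t : Term F V}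
    (h : Step R s t) : redexCount R t < redexCount R s := by
  obtain ⟨C, σ, l, r, hmem, rfl, rfl⟩ := h
  have hredex : ¬ NF (Step R) (l.subst σ) := fun hnf => hnf _ ⟨.hole, σ, l, r, hmem, rfl, rfl⟩
  refine redexCount_fill_lt C hredex ?_
  rw [redexCount_eq_zero_of_nf (hR _ hmem σ)]
  exact redexCount_pos_of_not_nf hredex

end redexCount

theorem terminating_of_forall_nf_rhs_subst {R : TRS F V}
    (hR : ∀ p ∈ R, ∀ σ, NF (Step R) (p.2.subst σ)) : Terminating (Step R) :=
  Subrelation.wf (redexCount_lt_of_step hR) (InvImage.wf (redexCount R) wellFounded_lt)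

/-- Right-reduced ground TRSs are terminating. -/
theorem right_reduced_ground_terminating {F V : Type} (R : TRS F V)
    (hG : GroundSys R) (hRR : RightReduced R) :
    Terminating (Step R) :=
  terminating_of_forall_nf_rhs_subst fun p hp σ => by
    rw [(hG p hp).2.subst_eq σ]
    exact hRR p hp

end KB
end
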